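/- arXiv:2506.19791 — 7 statements merged into one kernel-verified Lean document; each statement's English description precedes it below -/
import Mathlib

section
/- For any real x with 0 < x ≤ 1/π, one has 1/sinc(x) ≤ 1 + 2x², where sinc(x) = sin(πx)/(πx). -/
/-!
With `t = π x ∈ (0, 1]` the claim reads `t ≤ (1 + 2 t² / π²) sin t`. Bounding `sin t` below by
`t - t³ / 6` leaves the polynomial inequality `t² / 3 ≤ 2 - π² / 6`, which at `t = 1` is `π² ≤ 10`.
-/

open Real

lemma pi_sq_lt_ten : π ^ 2 < 10 := by
  nlinarith [pi_lt_d2, pi_pos]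

lemma self_le_one_add_two_sq_div_pi_sq_mul_sub_cube {t : ℝ} (ht₀ : 0 ≤ t) (ht₁ : t ≤ 1) :
    t ≤ (1 + 2 * t ^ 2 / π ^ 2) * (t - t ^ 3 / 6) := by
  have hπ : 0 < π ^ 2 := by positivity
  have hfactor : (1 + 2 * t ^ 2 / π ^ 2) * (t - t ^ 3 / 6) - t
      = t ^ 3 / π ^ 2 * ((2 - π ^ 2 / 6) - t ^ 2 / 3) := by
    field_simp
    ring
  have hpoly : 0 ≤ (2 - π ^ 2 / 6) - t ^ 2 / 3 := by
    nlinarith [pi_sq_lt_ten, mul_le_one₀ ht₁ ht₀ ht₁]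
  nlinarith [mul_nonneg (by positivity : 0 ≤ t ^ 3 / π ^ 2) hpoly]

lemma self_le_one_add_two_sq_div_pi_sq_mul_sin {t : ℝ} (ht₀ : 0 ≤ t) (ht₁ : t ≤ 1) :
    t ≤ (1 + 2 * t ^ 2 / π ^ 2) * sin t :=
  calc t ≤ (1 + 2 * t ^ 2 / π ^ 2) * (t - t ^ 3 / 6) :=
        self_le_one_add_two_sq_div_pi_sq_mul_sub_cube ht₀ ht₁
    _ ≤ (1 + 2 * t ^ 2 / π ^ 2) * sin t := by
        gcongr
        exact sin_ge_sub_cube ht₀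

theorem one_div_sinc_le (x : ℝ) (hx : 0 < x) (hx' : x ≤ 1 / π) :
    1 / (Real.sin (π * x) / (π * x)) ≤ 1 + 2 * x ^ 2 := by
  have ht₀ : 0 < π * x := mul_pos pi_pos hx
  have ht₁ : π * x ≤ 1 := (le_div_iff₀' pi_pos).mp hx'
  have hsin : 0 < sin (π * x) :=
    sin_pos_of_pos_of_lt_pi ht₀ (ht₁.trans_lt (by linarith [pi_gt_three]))
  have hx_sq : x ^ 2 = (π * x) ^ 2 / π ^ 2 := by field_simp
  rw [one_div_div, div_le_iff₀ hsin, hx_sq, ← mul_div_assoc]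
  exact self_le_one_add_two_sq_div_pi_sq_mul_sin ht₀.le ht₁
end

section
/- Let n ≥ 8 be an integer. Then (n+2)/n · 1/sinc(2/n) - 1 < 4/n, where sinc(t) = sin(πt)/(πt). -/
/-!
With `x = 2π/n`, the claim is equivalent to `(n + 2) x < (n + 4) sin x`. The Taylor bound
`sin x > x (1 - x² / 6)` reduces this to `(n + 4) x² ≤ 12`, i.e. `(n + 4) π² ≤ 3 n²`,
which holds for `n ≥ 8` since `π² < 10`.
-/

open Real

lemma div_sin_lt {x : ℝ} (hx : 0 < x) (hx6 : x ^ 2 < 6) :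
    x / sin x < 6 / (6 - x ^ 2) := by
  have hfac : 0 < x * (1 - x ^ 2 / 6) := mul_pos hx (by linarith)
  have hsin : x * (1 - x ^ 2 / 6) < sin x := by linarith [sin_gt_sub_cube hx]
  calc x / sin x < x / (x * (1 - x ^ 2 / 6)) := div_lt_div_of_pos_left hx hfac hsin
    _ = 6 / (6 - x ^ 2) := by field_simp

lemma add_four_mul_sq_two_pi_div_le {n : ℝ} (hn : 8 ≤ n) :
    (n + 4) * (π * (2 / n)) ^ 2 ≤ 12 := by
  have hπ : π ^ 2 < 10 := by nlinarith [pi_pos, pi_lt_d2]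
  have hn0 : 0 < n := by linarith
  rw [show (n + 4) * (π * (2 / n)) ^ 2 = 4 * (n + 4) * π ^ 2 / n ^ 2 by ring,
    div_le_iff₀ (by positivity)]
  nlinarith

theorem sinc_bound_n (n : ℕ) (hn : 8 ≤ n) :
    ((n : ℝ) + 2) / n * (1 / (Real.sin (π * (2 / n)) / (π * (2 / n)))) - 1 < 4 / n := by
  have hn' : (8 : ℝ) ≤ n := by exact_mod_cast hn
  set x := π * (2 / (n : ℝ))
  have hx : 0 < x := by positivity
  have hsq : (n + 4) * x ^ 2 ≤ 12 := add_four_mul_sq_two_pi_div_le hn'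
  have hx6 : x ^ 2 < 6 := by nlinarith
  have hsinc := div_sin_lt hx hx6
  calc ((n : ℝ) + 2) / n * (1 / (sin x / x)) - 1
      = (n + 2) / n * (x / sin x) - 1 := by rw [one_div_div]
    _ < (n + 2) / n * (6 / (6 - x ^ 2)) - 1 := by gcongr
    _ ≤ (n + 2) / n * ((n + 4) / (n + 2)) - 1 := by
      gcongr (n + 2) / n * ?_ - 1
      rw [div_le_div_iff₀ (by linarith) (by linarith)]
      linarith
    _ = 4 / n := by field_simp; ring
end

section
/- Let V_{n,r} = ∑_{j=0}^{r} C(n,j) denote the size of the Hamming ball of radius r in F₂ⁿ. Fix a positive integer m < n/2 - 1 and set β = (n-m)/(m+1). Then for all integers r with 0 ≤ r ≤ m, C(n, r+1) / V_{n,r} ≥ β - 1. -/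
open Finset

theorem choose_div_ball_ge (n m : ℕ) (hm : 0 < m) (hmn : (m : ℝ) < n / 2 - 1)
    (r : ℕ) (hr : r ≤ m) :
    ((n.choose (r + 1) : ℝ)) / (∑ j ∈ Finset.range (r + 1), (n.choose j : ℝ)) ≥
      ((n : ℝ) - m) / (m + 1) - 1 := by
  have hn : 2 * m + 2 < n := by
    have h : (2 * m + 2 : ℝ) < n := by linarith
    exact_mod_cast h
  have hmn' : m < n := by omega
  have hm1 : (0:ℝ) < (m:ℝ) + 1 := by positivity
  set β : ℝ := ((n : ℝ) - m) / (m + 1) with hβ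
  have key : ∀ j : ℕ, j ≤ m → β * (n.choose j : ℝ) ≤ (n.choose (j+1) : ℝ) := by
    intro j hj
    have h1 : n.choose (j+1) * (j+1) = n.choose j * (n - j) :=
      Nat.choose_succ_right_eq n j
    have h2 : (n - m) * (j + 1) ≤ (m + 1) * (n - j) := by
      zify [hmn'.le, show j ≤ n by omega]
      nlinarith [mul_le_mul_of_nonneg_right (show (j:ℤ) ≤ m by exact_mod_cast hj)
        (show (0:ℤ) ≤ (n:ℤ) + 1 by positivity)]
    have h3 : (n - m) * n.choose j * (j+1) ≤ (m+1) * n.choose (j+1) * (j+1) := by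
      calc (n - m) * n.choose j * (j+1) = (n - m) * (j+1) * n.choose j := by ring
        _ ≤ (m+1) * (n - j) * n.choose j := Nat.mul_le_mul_right _ h2
        _ = (m+1) * (n.choose j * (n - j)) := by ring
        _ = (m+1) * (n.choose (j+1) * (j+1)) := by rw [h1]
        _ = (m+1) * n.choose (j+1) * (j+1) := by ring
    have hnat : (n - m) * n.choose j ≤ (m + 1) * n.choose (j + 1) :=
      Nat.le_of_mul_le_mul_right h3 (Nat.succ_pos j)
    have hcast : ((n : ℝ) - m) * n.choose j ≤ ((m:ℝ) + 1) * n.choose (j + 1) := by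
      have := (Nat.cast_le (α := ℝ)).mpr hnat
      push_cast [Nat.cast_sub hmn'.le] at this
      linarith
    rw [hβ, div_mul_eq_mul_div, div_le_iff₀ hm1]
    nlinarith [hcast]
  have main : ∀ s : ℕ, s ≤ m →
      (β - 1) * (∑ j ∈ Finset.range (s+1), (n.choose j : ℝ)) ≤ n.choose (s+1) := by
    intro s
    induction s with
    | zero =>
      intro _
      norm_num [Finset.sum_range_one]
      have hβle : β ≤ (n:ℝ) - m := by
        rw [hβ]
        apply div_le_self
        · have : (m:ℝ) < n := by exact_mod_cast hmn'
          linarith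
        · linarith
      have : (0:ℝ) ≤ m := by positivity
      linarith
    | succ k ih =>
      intro hk
      have h1 := ih (by omega)
      have h2 := key (k+1) hk
      rw [Finset.sum_range_succ]
      nlinarith [h1, h2]
  have hVpos : 0 < ∑ j ∈ Finset.range (r + 1), (n.choose j : ℝ) := by
    have h0 : (n.choose 0 : ℝ) ≤ ∑ j ∈ Finset.range (r + 1), (n.choose j : ℝ) :=
      Finset.single_le_sum (f := fun j => (n.choose j : ℝ))
        (fun i _ => by positivity) (Finset.mem_range.mpr (Nat.succ_pos r))
    simpa using lt_of_lt_of_le (by norm_num) h0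
  rw [ge_iff_le, le_div_iff₀ hVpos]
  exact main r hr
end

section
/- Let V_{n,r} = ∑_{j=0}^{r} C(n,j). Fix a positive integer m < n/2 - 1 and set β = (n-m)/(m+1). Then for all integers r with 0 ≤ r ≤ m, V_{n,r+1} / V_{n,r} ≥ β. -/
open Finset

theorem ball_ratio_ge (n m : ℕ) (hm : 0 < m) (hmn : (m : ℝ) < n / 2 - 1)
    (r : ℕ) (hr : r ≤ m) :
    (∑ j ∈ Finset.range (r + 2), (n.choose j : ℝ)) /
      (∑ j ∈ Finset.range (r + 1), (n.choose j : ℝ)) ≥ ((n : ℝ) - m) / (m + 1) := by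
  have hm1 : (1:ℝ) ≤ m := by exact_mod_cast hm
  have hnm : (m : ℝ) + 2 < n := by linarith
  have hS : (0:ℝ) < ∑ j ∈ Finset.range (r + 1), (n.choose j : ℝ) := by
    apply Finset.sum_pos'
    · intro i _; positivity
    · refine ⟨0, Finset.mem_range.mpr (Nat.succ_pos r), ?_⟩
      simp
  rw [ge_iff_le, le_div_iff₀ hS]
  have key : ∀ j ∈ Finset.range (r+1),
      ((n:ℝ) - m) / (m+1) * (n.choose j : ℝ) ≤ (n.choose (j+1) : ℝ) := by
    intro j hj
    have hjm : j ≤ m := le_trans (Nat.lt_succ_iff.mp (Finset.mem_range.mp hj)) hr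
    have hjm' : (j:ℝ) ≤ m := by exact_mod_cast hjm
    have hjn : j ≤ n := by
      have : (j:ℝ) < n := by linarith
      exact_mod_cast this.le
    have hid : (n.choose (j+1) : ℝ) * (j+1) = (n.choose j : ℝ) * ((n:ℝ) - j) := by
      have h := Nat.choose_succ_right_eq n j
      have h2 := congrArg (fun x : ℕ => (x:ℝ)) h
      push_cast [Nat.cast_sub hjn] at h2
      linarith [h2]
    have hj1 : (0:ℝ) < (j:ℝ) + 1 := by positivity
    have hratio : ((n:ℝ) - m) / (m+1) ≤ ((n:ℝ) - j) / (j+1) := by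
      rw [div_le_div_iff₀ (by positivity) hj1]
      nlinarith
    have hc : (0:ℝ) ≤ (n.choose j : ℝ) := by positivity
    have h3 : ((n:ℝ) - m) / (m+1) * (n.choose j : ℝ) ≤ ((n:ℝ) - j) / (j+1) * (n.choose j : ℝ) :=
      mul_le_mul_of_nonneg_right hratio hc
    refine h3.trans ?_
    rw [div_mul_eq_mul_div, div_le_iff₀ hj1]
    nlinarith [hid]
  calc ((n:ℝ) - m) / (m+1) * ∑ j ∈ Finset.range (r + 1), (n.choose j : ℝ)
      = ∑ j ∈ Finset.range (r + 1), ((n:ℝ) - m) / (m+1) * (n.choose j : ℝ) := by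
        rw [Finset.mul_sum]
    _ ≤ ∑ j ∈ Finset.range (r + 1), (n.choose (j+1) : ℝ) := Finset.sum_le_sum key
    _ ≤ ∑ j ∈ Finset.range (r + 2), (n.choose j : ℝ) := by
        conv_rhs => rw [Finset.sum_range_succ']
        have h0 : (0:ℝ) ≤ (n.choose 0 : ℝ) := by positivity
        linarith
end

section
/- Let Z ∼ Bernoulli(p)^⊗n with p ∈ (0,1/2), let K ⊆ F₂ⁿ, and let Q_K(r) = |K ∩ B_{n,r}|/|K| be the CDF of the Hamming weight of a uniform point of K, where B_{n,r} is the Hamming ball of radius r. Then Pr(Z ∈ K) = |K| · ( (p/(1-p)) pⁿ + ((1-2p)/(1-p)) · E[ Q_K(|Z|) / C(n,|Z|) ] ), where |Z| ∼ Binomial(n,p). -/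
/-!
Sort the points of `K` by Hamming weight and sum by parts against the cumulative counts
`#{x ∈ K | |x| ≤ r} = |K| Q_K(r)`. With `f r = pʳ (1-p)ⁿ⁻ʳ`, the increments are
`f (r+1) - f r = -((1-2p)/(1-p)) f r`, which yields the expectation term, while the boundary term
`|K| f n = |K| pⁿ` is split according to `p/(1-p) + (1-2p)/(1-p) = 1`.
-/

open Finset

theorem Finset.sum_comp_eq_card_nsmul_sub_sum_card_le {α M : Type*} [AddCommGroup M]
    (K : Finset α) (w : α → ℕ) {n : ℕ} (hw : ∀ x ∈ K, w x ≤ n) (f : ℕ → M) :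
    ∑ x ∈ K, f (w x) = #K • f n - ∑ r ∈ range n, #{x ∈ K | w x ≤ r} • (f (r + 1) - f r) := by
  have telescope : ∀ x ∈ K, f (w x) = f n - ∑ r ∈ range n with w x ≤ r, (f (r + 1) - f r) := by
    intro x hx
    rw [show {r ∈ range n | w x ≤ r} = Ico (w x) n by ext; simp; omega,
      sum_Ico_sub _ (hw x hx), sub_sub_cancel]
  rw [sum_congr rfl telescope, sum_sub_distrib, sum_const]
  congr 1
  simp_rw [sum_filter]
  rw [sum_comm]
  simp_rw [← sum_filter, sum_const]

theorem pow_succ_mul_one_sub_pow_sub {𝕜 : Type*} [Field 𝕜] {p : 𝕜} (hp : p ≠ 1) {n r : ℕ}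
    (hr : r < n) :
    p ^ (r + 1) * (1 - p) ^ (n - (r + 1)) - p ^ r * (1 - p) ^ (n - r) =
      -((1 - 2 * p) / (1 - p)) * (p ^ r * (1 - p) ^ (n - r)) := by
  obtain ⟨k, rfl⟩ := Nat.exists_eq_add_of_lt hr
  have h1p : 1 - p ≠ 0 := sub_ne_zero.mpr hp.symm
  rw [show r + k + 1 - r = k + 1 by omega, show r + k + 1 - (r + 1) = k by omega]
  field_simp
  ring

theorem bernoulli_prob_as_cdf_expectation_general (n : ℕ) (p : ℝ) (hp' : p < 1 / 2)
    (K : Finset (Fin n → ZMod 2)) (hK : K.Nonempty)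
    (Q : ℕ → ℝ)
    (hQ : ∀ r, Q r = ((K.filter fun x => hammingNorm x ≤ r).card : ℝ) / K.card) :
    ∑ x ∈ K, p ^ hammingNorm x * (1 - p) ^ (n - hammingNorm x) =
      (K.card : ℝ) *
        ((p / (1 - p)) * p ^ n +
          ((1 - 2 * p) / (1 - p)) *
            ∑ r ∈ Finset.range (n + 1),
              (n.choose r : ℝ) * p ^ r * (1 - p) ^ (n - r) * (Q r / (n.choose r : ℝ))) := by
  have hp1 : p ≠ 1 := by linarith
  have hK0 : (#K : ℝ) ≠ 0 := by exact_mod_cast hK.card_pos.ne'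
  have hw : ∀ x ∈ K, hammingNorm x ≤ n := fun x _ =>
    hammingNorm_le_card_fintype.trans_eq (Fintype.card_fin n)
  set S : ℕ → ℝ := fun r => (#{x ∈ K | hammingNorm x ≤ r} : ℝ)
  have hlhs : ∑ x ∈ K, p ^ hammingNorm x * (1 - p) ^ (n - hammingNorm x) =
      #K * p ^ n + (1 - 2 * p) / (1 - p) * ∑ r ∈ range n, S r * (p ^ r * (1 - p) ^ (n - r)) := by
    rw [sum_comp_eq_card_nsmul_sub_sum_card_le K hammingNorm hw
        (fun r => p ^ r * (1 - p) ^ (n - r)), mul_sum, ← sub_neg_eq_add, ← sum_neg_distrib]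
    simp only [nsmul_eq_mul, Nat.sub_self, pow_zero, mul_one]
    congr 1
    refine sum_congr rfl fun r hr => ?_
    rw [pow_succ_mul_one_sub_pow_sub hp1 (mem_range.mp hr)]
    ring
  have hrhs : ∑ r ∈ range (n + 1),
      (n.choose r : ℝ) * p ^ r * (1 - p) ^ (n - r) * (Q r / (n.choose r : ℝ)) =
        (∑ r ∈ range (n + 1), S r * (p ^ r * (1 - p) ^ (n - r))) / #K := by
    rw [sum_div]
    refine sum_congr rfl fun r hr => ?_
    have hC : (n.choose r : ℝ) ≠ 0 := by
      exact_mod_cast (Nat.choose_pos (Nat.lt_succ_iff.mp (mem_range.mp hr))).ne'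
    simp only [S, hQ r]
    field_simp
  have hSn : S n = #K := by simp only [S, filter_true_of_mem hw]
  rw [hlhs, hrhs, sum_range_succ, hSn, Nat.sub_self, pow_zero]
  field_simp
  ring

/-- For `Z ∼ Bernoulli(p)^⊗n` and a nonempty `K ⊆ F₂ⁿ`, with
`Q_K(r) = |K ∩ B_{n,r}|/|K|` the CDF of the Hamming weight of a uniform point of `K`,
`Pr(Z ∈ K) = |K| ((p/(1-p)) pⁿ + ((1-2p)/(1-p)) E[Q_K(|Z|)/C(n,|Z|)])`. -/
theorem bernoulli_prob_as_cdf_expectation (n : ℕ) (p : ℝ) (hp : 0 < p) (hp' : p < 1 / 2)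
    (K : Finset (Fin n → ZMod 2)) (hK : K.Nonempty)
    (Q : ℕ → ℝ)
    (hQ : ∀ r, Q r = ((K.filter fun x => hammingNorm x ≤ r).card : ℝ) / K.card) :
    ∑ x ∈ K, p ^ hammingNorm x * (1 - p) ^ (n - hammingNorm x) =
      (K.card : ℝ) *
        ((p / (1 - p)) * p ^ n +
          ((1 - 2 * p) / (1 - p)) *
            ∑ r ∈ Finset.range (n + 1),
              (n.choose r : ℝ) * p ^ r * (1 - p) ^ (n - r) * (Q r / (n.choose r : ℝ))) :=
  bernoulli_prob_as_cdf_expectation_general n p hp' K hK Q hQ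
end

section
/- Let K ⊆ ℝⁿ be measurable with finite positive volume, σ > 0, Z ∼ N(0, Iₙ) standard Gaussian in ℝⁿ, and let g_K(r) = |K ∩ rB|/|K| where B is the unit Euclidean ball. Let r_eff(K) satisfy |r_eff(K)·B| = |K|, and let W ∼ χ²_{n+2}. Then Pr(σZ ∈ K) = E[ g_K(√(σ²W)) / (σ²W / r_eff(K)²)^{n/2} ]. -/
/-!
Writing `2 exp (-t / 2) = ∫_t^∞ exp (-w / 2) dw` with `t = ‖x‖² / σ²` and swapping the integrals
(Tonelli) turns the Gaussian mass of `K` into `∫₀^∞ exp (-w / 2) |K ∩ √(σ² w) B| dw`, up to a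
constant. Since `|K ∩ r B| = g_K(r) |K|` and `|K| = r_eff ^ n |B|`, what remains is an algebraic
rewriting of the `χ²_{n+2}` density, whose factor `w ^ (n / 2)` cancels against
`(σ² w / r_eff²) ^ (n / 2)`.
-/

open MeasureTheory Real Set
open scoped ENNReal

theorem lintegral_mul_measure_le_eq_lintegral_lintegral_Ici {α : Type*} [MeasurableSpace α]
    (μ : Measure α) [SFinite μ] (ν : Measure ℝ) [SFinite ν] {f : α → ℝ} (hf : Measurable f)
    {φ : ℝ → ℝ≥0∞} (hφ : Measurable φ) :
    ∫⁻ w, φ w * μ {x | f x ≤ w} ∂ν = ∫⁻ x, ∫⁻ w in Ici (f x), φ w ∂ν ∂μ := by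
  have hS : MeasurableSet {p : ℝ × α | f p.2 ≤ p.1} :=
    measurableSet_le (hf.comp measurable_snd) measurable_fst
  calc ∫⁻ w, φ w * μ {x | f x ≤ w} ∂ν
      = ∫⁻ w, ∫⁻ x, {p : ℝ × α | f p.2 ≤ p.1}.indicator (fun p => φ p.1) (w, x) ∂μ ∂ν := by
        refine lintegral_congr fun w => ?_
        rw [← lintegral_indicator_const (measurableSet_le hf measurable_const)]
        rfl
    _ = ∫⁻ x, ∫⁻ w, {p : ℝ × α | f p.2 ≤ p.1}.indicator (fun p => φ p.1) (w, x) ∂ν ∂μ :=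
        lintegral_lintegral_swap ((hφ.comp measurable_fst).indicator hS).aemeasurable
    _ = ∫⁻ x, ∫⁻ w in Ici (f x), φ w ∂ν ∂μ := by
        refine lintegral_congr fun x => ?_
        rw [← lintegral_indicator measurableSet_Ici]
        rfl

theorem lintegral_exp_neg_half_Ici {t : ℝ} (ht : 0 ≤ t) :
    ∫⁻ w in Ici t, ENNReal.ofReal (exp (-w / 2)) ∂volume.restrict (Ioi 0) =
      ENNReal.ofReal (2 * exp (-t / 2)) := by
  have hhalf : ∀ w : ℝ, exp (-w / 2) = exp (-1 / 2 * w) := fun w => by ring_nf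
  have ha : (-1 / 2 : ℝ) < 0 := by norm_num
  have hset : (Ici t ∩ Ioi 0 : Set ℝ) =ᵐ[volume] Ioi t := by
    have := (Ioi_ae_eq_Ici (a := t)).symm.inter (Filter.EventuallyEq.refl (ae volume) (Ioi 0))
    rwa [Ioi_inter_Ioi, max_eq_left ht] at this
  rw [Measure.restrict_restrict measurableSet_Ici, Measure.restrict_congr_set hset]
  simp_rw [hhalf]
  rw [← ofReal_integral_eq_lintegral_ofReal (integrableOn_exp_mul_Ioi ha t)
    (Filter.Eventually.of_forall fun w => (exp_pos _).le), integral_exp_mul_Ioi ha]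
  ring_nf

theorem setIntegral_two_mul_exp_neg_sq_norm_eq_integral_exp_mul_measure_inter_closedBall
    {E : Type*} [NormedAddCommGroup E] [MeasurableSpace E] [BorelSpace E] [ProperSpace E]
    (μ : Measure E) [IsFiniteMeasureOnCompacts μ] [SFinite μ] (K : Set E) {σ : ℝ} (hσ : σ ≠ 0) :
    ∫ x in K, 2 * exp (-‖x‖ ^ 2 / (2 * σ ^ 2)) ∂μ =
      ∫ w in Ioi 0, exp (-w / 2) * (μ (K ∩ Metric.closedBall 0 √(σ ^ 2 * w))).toReal := by
  have hball : ∀ w : ℝ, 0 ≤ w →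
      {x : E | ‖x‖ ^ 2 / σ ^ 2 ≤ w} = Metric.closedBall 0 √(σ ^ 2 * w) := by
    intro w hw
    ext x
    rw [mem_ofPred_eq, Metric.mem_closedBall, dist_zero_right,
      le_sqrt (norm_nonneg x) (by positivity), div_le_iff₀ (by positivity), mul_comm]
  have hfin : ∀ r, μ (K ∩ Metric.closedBall 0 r) ≠ ∞ := fun r =>
    ((measure_mono inter_subset_right).trans_lt measure_closedBall_lt_top).ne
  have hmono : Monotone fun r => μ (K ∩ Metric.closedBall (0 : E) r) := fun r s hrs =>
    measure_mono (inter_subset_inter_right _ (Metric.closedBall_subset_closedBall hrs))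
  have hmeas : Measurable fun w : ℝ =>
      exp (-w / 2) * (μ (K ∩ Metric.closedBall 0 √(σ ^ 2 * w))).toReal :=
    (measurable_exp.comp (by fun_prop)).mul (hmono.measurable.ennreal_toReal.comp (by fun_prop))
  rw [integral_eq_lintegral_of_nonneg_ae (Filter.Eventually.of_forall fun x => by positivity)
      (by fun_prop), integral_eq_lintegral_of_nonneg_ae
      (Filter.Eventually.of_forall fun w => by positivity) hmeas.aestronglyMeasurable]
  congr 1
  calc ∫⁻ x in K, ENNReal.ofReal (2 * exp (-‖x‖ ^ 2 / (2 * σ ^ 2))) ∂μ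
      = ∫⁻ x in K, ∫⁻ w in Ici (‖x‖ ^ 2 / σ ^ 2), ENNReal.ofReal (exp (-w / 2))
          ∂volume.restrict (Ioi 0) ∂μ := by
        refine lintegral_congr fun x => ?_
        rw [lintegral_exp_neg_half_Ici (by positivity)]
        ring_nf
    _ = ∫⁻ w in Ioi 0, ENNReal.ofReal (exp (-w / 2)) * μ.restrict K {x | ‖x‖ ^ 2 / σ ^ 2 ≤ w} :=
        (lintegral_mul_measure_le_eq_lintegral_lintegral_Ici _ _ (by fun_prop)
          (by fun_prop)).symm
    _ = ∫⁻ w in Ioi 0,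
          ENNReal.ofReal (exp (-w / 2) * (μ (K ∩ Metric.closedBall 0 √(σ ^ 2 * w))).toReal) := by
        refine setLIntegral_congr_fun measurableSet_Ioi fun w hw => ?_
        rw [hball w (le_of_lt hw), Measure.restrict_apply measurableSet_closedBall, inter_comm,
          ENNReal.ofReal_mul (exp_pos _).le, ENNReal.ofReal_toReal (hfin _)]

theorem toReal_measure_inter_div_mul_cancel {α : Type*} [MeasurableSpace α] {μ : Measure α}
    {K : Set α} (hK : μ K ≠ ∞) (s : Set α) :
    (μ (K ∩ s)).toReal / (μ K).toReal * (μ K).toReal = (μ (K ∩ s)).toReal := by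
  rcases eq_or_ne (μ K).toReal 0 with h | h
  · have hK0 : μ K = 0 := (ENNReal.toReal_eq_zero_iff _).mp h |>.resolve_right hK
    rw [measure_mono_null inter_subset_left hK0, ENNReal.toReal_zero, zero_div, zero_mul]
  · exact div_mul_cancel₀ _ h

theorem EuclideanSpace.toReal_volume_closedBall_one (ι : Type*) [Fintype ι] [Nonempty ι]
    (x : EuclideanSpace ℝ ι) :
    (volume (Metric.closedBall x 1)).toReal =
      √π ^ Fintype.card ι / Gamma (Fintype.card ι / 2 + 1) := by
  rw [EuclideanSpace.volume_closedBall, ENNReal.ofReal_one, one_pow, one_mul,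
    ENNReal.toReal_ofReal (div_nonneg (by positivity) (Gamma_pos_of_pos (by positivity)).le)]

theorem div_sq_rpow_one_div_rpow {n : ℕ} (hn : n ≠ 0) {a x : ℝ} (ha : 0 ≤ a) (hx : 0 ≤ x) :
    (x / (a ^ ((1 : ℝ) / n)) ^ 2) ^ ((n : ℝ) / 2) = x ^ ((n : ℝ) / 2) / a := by
  rw [div_rpow hx (by positivity), ← rpow_natCast, ← rpow_mul ha, ← rpow_mul ha,
    show (1 : ℝ) / n * ((2 : ℕ) : ℝ) * (n / 2) = 1 by push_cast; field_simp, rpow_one]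

theorem two_rpow_mul_Gamma_mul_sqrt_pi_pow_div_Gamma (n : ℕ) :
    2 ^ (((n : ℝ) + 2) / 2) * Gamma (((n : ℝ) + 2) / 2) * (√π ^ n / Gamma (n / 2 + 1)) =
      2 * (2 * π) ^ ((n : ℝ) / 2) := by
  have hG : Gamma ((n : ℝ) / 2 + 1) ≠ 0 := (Gamma_pos_of_pos (by positivity)).ne'
  rw [show ((n : ℝ) + 2) / 2 = n / 2 + 1 by ring, rpow_add_one two_ne_zero,
    sqrt_eq_rpow, ← rpow_natCast, ← rpow_mul pi_pos.le, mul_rpow zero_le_two pi_pos.le]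
  field_simp

/-- The integrand of the `χ²_{n+2}` expectation, with `|B| = √π ^ n / Γ (n / 2 + 1)`, `V = |K|`
and `m = |K ∩ √(σ² w) B|`. -/
theorem chiSq_density_mul_div_rpow_eq {n : ℕ} (hn : n ≠ 0) (σ : ℝ) {w V g m : ℝ} (hw : 0 < w)
    (hV : 0 ≤ V) (hgV : g * V = m) :
    w ^ ((n : ℝ) / 2) * exp (-w / 2) / (2 ^ (((n : ℝ) + 2) / 2) * Gamma (((n : ℝ) + 2) / 2)) *
        (g / (σ ^ 2 * w / ((V / (√π ^ n / Gamma (n / 2 + 1))) ^ ((1 : ℝ) / n)) ^ 2) ^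
          ((n : ℝ) / 2)) =
      (2 * π * σ ^ 2) ^ (-(n : ℝ) / 2) / 2 * (exp (-w / 2) * m) := by
  have hVn : 0 < √π ^ n / Gamma (n / 2 + 1) :=
    div_pos (by positivity) (Gamma_pos_of_pos (by positivity))
  have hgauss : (2 * π * σ ^ 2) ^ (-(n : ℝ) / 2) =
      ((2 * π) ^ ((n : ℝ) / 2) * (σ ^ 2) ^ ((n : ℝ) / 2))⁻¹ := by
    rw [neg_div, rpow_neg (by positivity), mul_rpow (by positivity) (sq_nonneg σ)]
  rw [div_sq_rpow_one_div_rpow hn (div_nonneg hV hVn.le) (by positivity),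
    mul_rpow (sq_nonneg σ) hw.le, hgauss, ← hgV,
    (eq_div_iff hVn.ne').mpr (two_rpow_mul_Gamma_mul_sqrt_pi_pow_div_Gamma n)]
  field_simp

theorem gaussian_measure_as_chisq_expectation_general (n : ℕ) (hn : 0 < n)
    (K : Set (EuclideanSpace ℝ (Fin n)))
    (hKfin : volume K < ⊤)
    (σ : ℝ) (hσ : 0 < σ)
    (gK : ℝ → ℝ)
    (hgK : ∀ r, gK r =
      (volume (K ∩ Metric.closedBall (0 : EuclideanSpace ℝ (Fin n)) r)).toReal /
        (volume K).toReal)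
    (Vn reff : ℝ)
    (hVn : Vn = (volume (Metric.closedBall (0 : EuclideanSpace ℝ (Fin n)) 1)).toReal)
    (hreff : reff = ((volume K).toReal / Vn) ^ ((1 : ℝ) / n)) :
    ∫ x in K, (2 * π * σ ^ 2) ^ (-(n : ℝ) / 2) * Real.exp (-‖x‖ ^ 2 / (2 * σ ^ 2)) =
      ∫ w in Set.Ioi (0 : ℝ),
        (w ^ ((n : ℝ) / 2) * Real.exp (-w / 2) /
            (2 ^ (((n : ℝ) + 2) / 2) * Real.Gamma (((n : ℝ) + 2) / 2))) *
          (gK (Real.sqrt (σ ^ 2 * w)) / (σ ^ 2 * w / reff ^ 2) ^ ((n : ℝ) / 2)) := by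
  have : Nonempty (Fin n) := Fin.pos_iff_nonempty.mp hn
  rw [hVn, EuclideanSpace.toReal_volume_closedBall_one, Fintype.card_fin] at hreff
  subst hreff
  calc ∫ x in K, (2 * π * σ ^ 2) ^ (-(n : ℝ) / 2) * exp (-‖x‖ ^ 2 / (2 * σ ^ 2))
      = (2 * π * σ ^ 2) ^ (-(n : ℝ) / 2) / 2 * ∫ x in K, 2 * exp (-‖x‖ ^ 2 / (2 * σ ^ 2)) := by
        rw [← integral_const_mul]
        congr with x
        ring
    _ = (2 * π * σ ^ 2) ^ (-(n : ℝ) / 2) / 2 * ∫ w in Ioi 0,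
          exp (-w / 2) * (volume (K ∩ Metric.closedBall 0 √(σ ^ 2 * w))).toReal := by
        rw [setIntegral_two_mul_exp_neg_sq_norm_eq_integral_exp_mul_measure_inter_closedBall _ _
          hσ.ne']
    _ = _ := by
        rw [← integral_const_mul]
        refine setIntegral_congr_fun measurableSet_Ioi fun w hw => ?_
        rw [hgK, chiSq_density_mul_div_rpow_eq hn.ne' σ hw ENNReal.toReal_nonneg
          (toReal_measure_inter_div_mul_cancel hKfin.ne _)]

/-- For a measurable set `K ⊆ ℝⁿ` of finite positive volume and `σ > 0`, the Gaussian
probability `Pr(σZ ∈ K)` equals `E[ g_K(√(σ²W)) / (σ²W / r_eff(K)²)^{n/2} ]` where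
`W ∼ χ²_{n+2}` (written out as explicit integrals against the densities). -/
theorem gaussian_measure_as_chisq_expectation (n : ℕ) (hn : 0 < n)
    (K : Set (EuclideanSpace ℝ (Fin n))) (hKm : MeasurableSet K)
    (hKpos : 0 < volume K) (hKfin : volume K < ⊤)
    (σ : ℝ) (hσ : 0 < σ)
    (gK : ℝ → ℝ)
    (hgK : ∀ r, gK r =
      (volume (K ∩ Metric.closedBall (0 : EuclideanSpace ℝ (Fin n)) r)).toReal /
        (volume K).toReal)
    (Vn reff : ℝ)
    (hVn : Vn = (volume (Metric.closedBall (0 : EuclideanSpace ℝ (Fin n)) 1)).toReal)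
    (hreff : reff = ((volume K).toReal / Vn) ^ ((1 : ℝ) / n)) :
    ∫ x in K, (2 * π * σ ^ 2) ^ (-(n : ℝ) / 2) * Real.exp (-‖x‖ ^ 2 / (2 * σ ^ 2)) =
      ∫ w in Set.Ioi (0 : ℝ),
        (w ^ ((n : ℝ) / 2) * Real.exp (-w / 2) /
            (2 ^ (((n : ℝ) + 2) / 2) * Real.Gamma (((n : ℝ) + 2) / 2))) *
          (gK (Real.sqrt (σ ^ 2 * w)) / (σ ^ 2 * w / reff ^ 2) ^ ((n : ℝ) / 2)) :=
  gaussian_measure_as_chisq_expectation_general n hn K hKfin σ hσ gK hgK Vn reff hVn hreff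
end

section
/- Let G_Zador(n) = Γ(1+2/n)/(n V_n^{2/n}) with V_n = π^{n/2}/Γ(1+n/2), and let G*(n) = 1/((n+2) V_n^{2/n}). Then log G_Zador(n) = −log(2π) − 1 + (log(πn) − 2γ)/n + O(n^{-2}) as n → ∞, where γ is the Euler–Mascheroni constant; in particular G_Zador(n)/G*(n) = 1 + Ω(1/n). -/
/-!
Since `log G_Zador(n) = log Γ(1 + 2/n) - log n - log π + (2/n) log Γ(1 + n/2)`, the expansion
comes from two estimates on `log Γ`.

Near `1`, `0 ≤ log Γ(1 + x) + γ x ≤ 2 x²` for `0 < x ≤ 1`. The lower bound is the tangent line at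
`1` of the convex function `log Γ`, whose slope there is `Γ'(1) = -γ`. The upper bound comes from
the chord inequality `log Γ(n + 1 + x) ≤ log n! + x log (n + 1)` of Bohr–Mollerup, which gives
`log Γ(1 + x) ≤ x log (n + 1) - ∑_{k ≤ n} log (1 + x / k)`, and `H_n - log (n + 1) → γ`.

At infinity, Stirling's formula for `m!` with Robbins' error `1/(12m)` extends to real `s ≥ 1`,
with error `3/s`, by interpolating `log Γ` between `m + 1` and `m + 2` (`m = ⌊s⌋`) using convexity.
Taking `s = n/2` and multiplying by `2/n` turns this error into `O(1/n²)`.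

Finally `G_Zador(n) / G*(n) = (1 + 2/n) Γ(1 + 2/n) ≥ (1 + 2/n)(1 - 2γ/n)`, and `γ < 2/3`.
-/

open Real Filter Topology Stirling

lemma log_sub_log_le_sub_div {x y : ℝ} (hx : 0 < x) (hy : 0 < y) :
    log x - log y ≤ (x - y) / y := by
  have h := log_le_sub_one_of_pos (div_pos hx hy)
  rwa [log_div hx.ne' hy.ne', div_sub_one hy.ne'] at h

lemma sub_div_le_log_sub_log {x y : ℝ} (hx : 0 < x) (hy : 0 < y) :
    (x - y) / x ≤ log x - log y := by
  have h := one_sub_inv_le_log_of_pos (div_pos hx hy)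
  rwa [log_div hx.ne' hy.ne', inv_div, one_sub_div hx.ne'] at h

lemma sub_sq_le_log_one_add {u : ℝ} (hu : 0 ≤ u) : u - u ^ 2 ≤ log (1 + u) := by
  have h := sub_div_le_log_sub_log (x := 1 + u) (y := 1) (by linarith) one_pos
  rw [log_one, sub_zero, add_sub_cancel_left] at h
  refine le_trans ?_ h
  rw [le_div_iff₀ (by linarith)]
  nlinarith [mul_nonneg hu (sq_nonneg u)]

lemma sum_range_one_div_add_one_sq_le_two (n : ℕ) :
    ∑ m ∈ Finset.range n, 1 / ((m : ℝ) + 1) ^ 2 ≤ 2 := by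
  refine le_of_eq_of_le ?_ (by simpa using sum_Ioo_inv_sq_le (α := ℝ) 0 (n + 1))
  rw [← Finset.Ico_add_one_left_eq_Ioo, Finset.sum_Ico_eq_sum_range]
  simp [add_comm]

lemma log_comp_Gamma_add_one {y : ℝ} (hy : 0 < y) :
    (log ∘ Gamma) (y + 1) = (log ∘ Gamma) y + log y := by
  simp only [Function.comp, Gamma_add_one hy.ne', log_mul hy.ne' (Gamma_pos_of_pos hy).ne',
    add_comm]

lemma log_Gamma_one_add_add_eulerMascheroniConstant_mul_nonneg {x : ℝ} (hx : 0 < x) :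
    0 ≤ log (Gamma (1 + x)) + eulerMascheroniConstant * x := by
  have hderiv : HasDerivAt (log ∘ Gamma) (-eulerMascheroniConstant) 1 := by
    simpa [Function.comp_def] using hasDerivAt_Gamma_one.log (by simp)
  have h := convexOn_log_Gamma.le_slope_of_hasDerivAt (x := 1) (y := 1 + x)
    (by norm_num) (by simp; linarith) (by linarith) hderiv
  rw [slope_def_field, le_div_iff₀ (by linarith)] at h
  simp only [add_sub_cancel_left, Function.comp, Gamma_one, log_one, sub_zero] at h
  linarith

lemma log_Gamma_one_add_le_mul_log_sub_sum {x : ℝ} (hx0 : 0 < x) (hx1 : x ≤ 1) (n : ℕ) :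
    log (Gamma (1 + x)) ≤
      x * log (n + 1) - ∑ m ∈ Finset.range n, log (1 + x / (m + 1)) := by
  have hshift := BohrMollerup.f_add_nat_eq @log_comp_Gamma_add_one (by linarith : 0 < 1 + x) n
  have hfact := BohrMollerup.f_add_nat_eq @log_comp_Gamma_add_one one_pos n
  have hchord := BohrMollerup.f_add_nat_le convexOn_log_Gamma @log_comp_Gamma_add_one
    n.succ_ne_zero hx0 hx1
  have hterm : ∀ m ∈ Finset.range n,
      log (1 + x / (m + 1)) = log (1 + x + m) - log (1 + m) := fun m _ => by
    rw [← log_div (by positivity) (by positivity)]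
    congr 1
    field_simp
    ring
  simp only [Function.comp, Gamma_one, log_one, zero_add] at hshift hfact hchord
  push_cast at hchord
  rw [show (n : ℝ) + 1 + x = 1 + x + n by ring] at hchord
  rw [add_comm 1 (n : ℝ)] at hfact
  rw [Finset.sum_congr rfl hterm, Finset.sum_sub_distrib]
  linarith

lemma log_Gamma_one_add_add_eulerMascheroniConstant_mul_le {x : ℝ} (hx0 : 0 < x) (hx1 : x ≤ 1) :
    log (Gamma (1 + x)) + eulerMascheroniConstant * x ≤ 2 * x ^ 2 := by
  suffices ∀ n, log (Gamma (1 + x)) ≤ -x * eulerMascheroniSeq n + 2 * x ^ 2 by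
    linarith [ge_of_tendsto'
      ((tendsto_eulerMascheroniSeq.const_mul (-x)).add_const (2 * x ^ 2)) this]
  refine fun n => (log_Gamma_one_add_le_mul_log_sub_sum hx0 hx1 n).trans ?_
  have hterm : ∀ m ∈ Finset.range n,
      x * (1 / ((m : ℝ) + 1)) - x ^ 2 * (1 / ((m : ℝ) + 1) ^ 2) ≤ log (1 + x / (m + 1)) :=
    fun m _ => by
      rw [mul_one_div, mul_one_div, ← div_pow]
      exact sub_sq_le_log_one_add (by positivity)
  have hsum := Finset.sum_le_sum hterm
  rw [Finset.sum_sub_distrib, ← Finset.mul_sum, ← Finset.mul_sum] at hsum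
  have hsq := mul_le_mul_of_nonneg_left (sum_range_one_div_add_one_sq_le_two n) (sq_nonneg x)
  have hharm : (harmonic n : ℝ) = ∑ m ∈ Finset.range n, 1 / ((m : ℝ) + 1) := by
    simp [harmonic]
  simp only [eulerMascheroniSeq, hharm]
  linarith

lemma log_stirlingSeq_le {n : ℕ} (hn : n ≠ 0) :
    log (stirlingSeq n) ≤ log √π + 1 / (12 * n) := by
  -- Robbins' bound `1 / (12 k (k + 1))` on the steps makes this sequence increase to `log √π`.
  have hmono : Monotone fun k : ℕ => log (stirlingSeq (k + 1)) - 1 / (12 * ((k : ℝ) + 1)) := by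
    refine monotone_nat_of_le_succ fun k => ?_
    have h := log_stirlingSeq_sdiff_le (k + 1)
    have hsplit : 1 / (12 * ((k + 1 : ℕ) : ℝ) * ((k + 1 : ℕ) + 1)) =
        1 / (12 * ((k : ℝ) + 1)) - 1 / (12 * (((k + 1 : ℕ) : ℝ) + 1)) := by
      push_cast
      field_simp
      ring
    rw [hsplit] at h
    linarith
  have hlim : Tendsto (fun k : ℕ => log (stirlingSeq (k + 1)) - 1 / (12 * ((k : ℝ) + 1)))
      atTop (𝓝 (log √π - 0)) := by
    refine Tendsto.sub ?_ ?_
    · exact ((continuousAt_log (by positivity)).tendsto.comp tendsto_stirlingSeq_sqrt_pi).comp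
        (tendsto_add_atTop_nat 1)
    · simpa [mul_comm, ← div_div] using
        tendsto_one_div_add_atTop_nhds_zero_nat.div_const (12 : ℝ)
  obtain ⟨k, rfl⟩ := Nat.exists_eq_succ_of_ne_zero hn
  have := hmono.ge_of_tendsto hlim k
  push_cast at this ⊢
  linarith

lemma log_factorial_le_stirling {n : ℕ} (hn : n ≠ 0) :
    log n.factorial ≤ n * log n - n + log n / 2 + log (2 * π) / 2 + 1 / (12 * n) := by
  have hn' : (0 : ℝ) < n := by positivity
  have h := log_stirlingSeq_le hn
  rw [log_stirlingSeq_formula, log_sqrt pi_pos.le, log_div hn'.ne' (exp_pos 1).ne', log_exp,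
    log_mul two_ne_zero hn'.ne'] at h
  rw [log_mul two_ne_zero pi_pos.ne']
  linarith

lemma log_factorial_add_mul_log_le_log_Gamma {m : ℕ} (hm : m ≠ 0) {t : ℝ} (ht : 0 ≤ t) :
    log m.factorial + t * log m ≤ log (Gamma (m + 1 + t)) := by
  rcases ht.eq_or_lt with rfl | ht
  · simp [Gamma_nat_eq_factorial]
  have h := BohrMollerup.f_add_nat_ge convexOn_log_Gamma @log_comp_Gamma_add_one
    (n := m + 1) (by omega) ht
  simpa [Gamma_nat_eq_factorial] using h

lemma log_Gamma_le_log_factorial_add_mul_log (m : ℕ) {t : ℝ} (ht0 : 0 ≤ t) (ht1 : t ≤ 1) :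
    log (Gamma (m + 1 + t)) ≤ log m.factorial + t * log (m + 1) := by
  rcases ht0.eq_or_lt with rfl | ht0
  · simp [Gamma_nat_eq_factorial]
  have h := BohrMollerup.f_add_nat_le convexOn_log_Gamma @log_comp_Gamma_add_one
    (n := m + 1) m.succ_ne_zero ht0 ht1
  simpa [Gamma_nat_eq_factorial] using h

lemma abs_log_Gamma_one_add_sub_stirling_le_of_nat_le {s : ℝ} {m : ℕ} (hm : m ≠ 0)
    (hms : m ≤ s) (hsm : s ≤ m + 1) :
    |log (Gamma (1 + s)) - (s * log s - s + log (2 * π * s) / 2)| ≤ 3 / (2 * m) := by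
  have hm' : (1 : ℝ) ≤ m := by exact_mod_cast Nat.one_le_iff_ne_zero.2 hm
  have hm0 : (0 : ℝ) < m := by linarith
  have hs0 : 0 < s := by linarith
  have hsplit : 1 + s = m + 1 + (s - m) := by ring
  have hlo := log_factorial_add_mul_log_le_log_Gamma hm (sub_nonneg.2 hms)
  have hup := log_Gamma_le_log_factorial_add_mul_log m (sub_nonneg.2 hms) (by linarith)
  have hlo' := le_log_factorial_stirling hm
  have hup' := log_factorial_le_stirling hm
  rw [← hsplit] at hlo hup
  have hs_log_lo : s - m ≤ s * (log s - log m) :=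
    (div_le_iff₀' (by positivity)).1 (sub_div_le_log_sub_log (by positivity) (by positivity))
  have hm_log : m * (log s - log m) ≤ s - m :=
    (le_div_iff₀' (by positivity)).1 (log_sub_log_le_sub_div (by positivity) (by positivity))
  have hlog_nonneg : 0 ≤ log s - log m := sub_nonneg.2 (log_le_log (by positivity) hms)
  have hlog_le : log s - log m ≤ 1 / m :=
    (log_sub_log_le_sub_div (by positivity) (by positivity)).trans (by gcongr; linarith)
  have hs_log_up : s * (log s - log m) ≤ (s - m) + 1 / m := by
    linarith [mul_le_of_le_one_left hlog_nonneg (show s - m ≤ 1 by linarith)]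
  have hstep : (s - m) * (log (m + 1) - log m) ≤ 1 / m := by
    have h := log_sub_log_le_sub_div (x := m + 1) (y := m) (by positivity) (by positivity)
    rw [add_sub_cancel_left] at h
    have hstep_nonneg : 0 ≤ log (m + 1) - log m := sub_nonneg.2 (log_le_log (by positivity) (by linarith))
    exact (mul_le_of_le_one_left hstep_nonneg (by linarith)).trans h
  have hinv : 0 < 1 / (m : ℝ) := by positivity
  rw [log_mul (by positivity) hs0.ne']
  rw [abs_le]
  constructor
  · linear_combination hlo + hlo' + hs_log_up + hlog_le / 2
  · linear_combination hup + hup' + hs_log_lo + hlog_nonneg / 2 + hstep + 5 / 12 * hinv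

lemma abs_log_Gamma_one_add_sub_stirling_le {s : ℝ} (hs : 1 ≤ s) :
    |log (Gamma (1 + s)) - (s * log s - s + log (2 * π * s) / 2)| ≤ 3 / s := by
  have hm : ⌊s⌋₊ ≠ 0 := (Nat.floor_pos.2 hs).ne'
  have hms : (⌊s⌋₊ : ℝ) ≤ s := Nat.floor_le (by linarith)
  have hsm : s < ⌊s⌋₊ + 1 := Nat.lt_floor_add_one s
  refine (abs_log_Gamma_one_add_sub_stirling_le_of_nat_le hm hms hsm.le).trans ?_
  have hm' : (1 : ℝ) ≤ ⌊s⌋₊ := by exact_mod_cast Nat.one_le_iff_ne_zero.2 hm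
  rw [div_le_div_iff₀ (by positivity) (by positivity)]
  linarith

-- `V_x`, `G_Zador(x)` and `G*(x)` for a real dimension `x`; `G*` is the normalized second moment
-- of the ball.
noncomputable def unitBallVolume (x : ℝ) : ℝ := π ^ (x / 2) / Gamma (1 + x / 2)

noncomputable def zadorBound (x : ℝ) : ℝ := Gamma (1 + 2 / x) / (x * unitBallVolume x ^ (2 / x))

noncomputable def ballSecondMoment (x : ℝ) : ℝ := 1 / ((x + 2) * unitBallVolume x ^ (2 / x))

lemma unitBallVolume_pos {x : ℝ} (hx : 0 ≤ x) : 0 < unitBallVolume x :=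
  div_pos (rpow_pos_of_pos pi_pos _) (Gamma_pos_of_pos (by positivity))

lemma log_zadorBound {x : ℝ} (hx : 0 < x) :
    log (zadorBound x) =
      log (Gamma (1 + 2 / x)) - log x - log π + 2 / x * log (Gamma (1 + x / 2)) := by
  have hV := unitBallVolume_pos hx.le
  rw [zadorBound, log_div (Gamma_pos_of_pos (by positivity)).ne' (by positivity),
    log_mul hx.ne' (by positivity), log_rpow hV, unitBallVolume,
    log_div (by positivity) (Gamma_pos_of_pos (by positivity)).ne', log_rpow pi_pos]
  field_simp
  ring

lemma zadorBound_div_ballSecondMoment {x : ℝ} (hx : 0 < x) :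
    zadorBound x / ballSecondMoment x = (1 + 2 / x) * Gamma (1 + 2 / x) := by
  have hV := unitBallVolume_pos hx.le
  rw [zadorBound, ballSecondMoment]
  field_simp

lemma abs_log_zadorBound_sub_le {x : ℝ} (hx : 2 ≤ x) :
    |log (zadorBound x) -
        (-log (2 * π) - 1 + (log (π * x) - 2 * eulerMascheroniConstant) / x)| ≤ 20 / x ^ 2 := by
  have hx0 : 0 < x := by linarith
  have hsmall := log_Gamma_one_add_add_eulerMascheroniConstant_mul_nonneg (x := 2 / x) (by positivity)
  have hsmall' := log_Gamma_one_add_add_eulerMascheroniConstant_mul_le (x := 2 / x) (by positivity)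
    (by rw [div_le_one hx0]; exact hx)
  have hlarge := abs_log_Gamma_one_add_sub_stirling_le (s := x / 2) (by linarith)
  have hsplit : log (zadorBound x) -
        (-log (2 * π) - 1 + (log (π * x) - 2 * eulerMascheroniConstant) / x) =
      (log (Gamma (1 + 2 / x)) + eulerMascheroniConstant * (2 / x)) + 2 / x *
        (log (Gamma (1 + x / 2)) -
          (x / 2 * log (x / 2) - x / 2 + log (2 * π * (x / 2)) / 2)) := by
    rw [log_zadorBound hx0, show 2 * π * (x / 2) = π * x by ring, log_div hx0.ne' two_ne_zero,
      log_mul two_ne_zero pi_pos.ne']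
    field_simp
    ring
  rw [hsplit]
  set A := log (Gamma (1 + 2 / x)) + eulerMascheroniConstant * (2 / x)
  set B := log (Gamma (1 + x / 2)) - (x / 2 * log (x / 2) - x / 2 + log (2 * π * (x / 2)) / 2)
  calc |A + 2 / x * B| ≤ |A| + |2 / x * B| := abs_add_le _ _
    _ = |A| + 2 / x * |B| := by rw [abs_mul, abs_of_pos (by positivity : 0 < 2 / x)]
    _ ≤ 2 * (2 / x) ^ 2 + 2 / x * (3 / (x / 2)) := by
        rw [abs_of_nonneg hsmall]
        gcongr
    _ = 20 / x ^ 2 := by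
        field_simp
        ring

lemma one_add_div_four_le_one_add_mul_Gamma_one_add {x : ℝ} (hx0 : 0 < x) (hx : x ≤ 1 / 8) :
    1 + x / 4 ≤ (1 + x) * Gamma (1 + x) := by
  have hΓ : 1 - eulerMascheroniConstant * x ≤ Gamma (1 + x) := by
    have h := log_Gamma_one_add_add_eulerMascheroniConstant_mul_nonneg hx0
    calc 1 - eulerMascheroniConstant * x ≤ exp (-(eulerMascheroniConstant * x)) := by
          linarith [add_one_le_exp (-(eulerMascheroniConstant * x))]
      _ ≤ exp (log (Gamma (1 + x))) := by gcongr; linarith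
      _ = Gamma (1 + x) := exp_log (Gamma_pos_of_pos (by linarith))
  have hγ := eulerMascheroniConstant_lt_two_thirds
  have hγ0 : 0 < eulerMascheroniConstant := by linarith [one_half_lt_eulerMascheroniConstant]
  nlinarith [mul_le_mul_of_nonneg_left hΓ (show 0 ≤ 1 + x by linarith),
    mul_pos hx0 hγ0, mul_pos (mul_pos hx0 hx0) hγ0]

/-- Asymptotic expansion of `log G_Zador(n)` and the fact that
`G_Zador(n)/G*(n) = 1 + Ω(1/n)`. -/
theorem zador_expansion (GZ Gstar : ℕ → ℝ)
    (hGZ : ∀ n : ℕ, GZ n =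
      Real.Gamma (1 + 2 / n) /
        ((n : ℝ) * (π ^ ((n : ℝ) / 2) / Real.Gamma (1 + (n : ℝ) / 2)) ^ ((2 : ℝ) / n)))
    (hGstar : ∀ n : ℕ, Gstar n =
      1 / (((n : ℝ) + 2) * (π ^ ((n : ℝ) / 2) / Real.Gamma (1 + (n : ℝ) / 2)) ^ ((2 : ℝ) / n))) :
    (∃ C : ℝ, ∃ N : ℕ, ∀ n : ℕ, N ≤ n →
      |Real.log (GZ n) -
          (-Real.log (2 * π) - 1 +
            (Real.log (π * n) - 2 * Real.eulerMascheroniConstant) / n)| ≤ C / (n : ℝ) ^ 2) ∧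
    (∃ c : ℝ, 0 < c ∧ ∃ N : ℕ, ∀ n : ℕ, N ≤ n → GZ n / Gstar n - 1 ≥ c / n) := by
  have hGZ' : ∀ n : ℕ, GZ n = zadorBound n := hGZ
  have hGstar' : ∀ n : ℕ, Gstar n = ballSecondMoment n := hGstar
  refine ⟨⟨20, 2, fun n hn => ?_⟩, ⟨1 / 2, by norm_num, 16, fun n hn => ?_⟩⟩
  · rw [hGZ']
    exact abs_log_zadorBound_sub_le (by exact_mod_cast hn)
  · have hn' : (16 : ℝ) ≤ n := by exact_mod_cast hn
    have h := one_add_div_four_le_one_add_mul_Gamma_one_add (x := 2 / n) (by positivity)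
      (by rw [div_le_iff₀ (by positivity)]; linarith)
    rw [hGZ', hGstar', zadorBound_div_ballSecondMoment (by positivity)]
    linarith [show (2 / n : ℝ) / 4 = 1 / 2 / n by ring]
end
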